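/- arXiv:1004.5505 — 4 statements merged into one kernel-verified Lean document; each statement's English description precedes it below -/
import Mathlib

section
/- For every natural number k ≥ 1, the function X(x) = (1−x)·sin(2πkx) satisfies X''(x) + (2πk)² X(x) = −4πk·cos(2πkx) for all x ∈ [0,1], together with the boundary conditions X(0) = X(1) and X'(1) = 0; that is, X is an associated function of the spectral problem corresponding to the eigenfunction cos(2πkx) and the eigenvalue (2πk)². -/
open Real Set

lemma hasDerivAt_one_sub_mul_sin (a x : ℝ) :
    HasDerivAt (fun x => (1 - x) * sin (a * x)) (a * (1 - x) * cos (a * x) - sin (a * x)) x := by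
  have hax : HasDerivAt (fun x => a * x) a x := by simpa using (hasDerivAt_id' x).const_mul a
  exact (((hasDerivAt_id' x).const_sub 1).mul hax.sin).congr_deriv (by ring)

lemma deriv_one_sub_mul_sin (a : ℝ) :
    deriv (fun x => (1 - x) * sin (a * x)) = fun x => a * (1 - x) * cos (a * x) - sin (a * x) :=
  funext fun x => (hasDerivAt_one_sub_mul_sin a x).deriv

lemma deriv_deriv_one_sub_mul_sin_add (a x : ℝ) :
    deriv (deriv (fun x => (1 - x) * sin (a * x))) x + a ^ 2 * ((1 - x) * sin (a * x))
      = -(2 * a) * cos (a * x) := by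
  have hax : HasDerivAt (fun x => a * x) a x := by simpa using (hasDerivAt_id' x).const_mul a
  have hX' : HasDerivAt (fun x => a * (1 - x) * cos (a * x) - sin (a * x))
      (-a * cos (a * x) - a ^ 2 * (1 - x) * sin (a * x) - a * cos (a * x)) x :=
    ((((hasDerivAt_id' x).const_sub 1).const_mul a).mul hax.cos).sub hax.sin
      |>.congr_deriv (by ring)
  rw [deriv_one_sub_mul_sin, hX'.deriv]
  ring

theorem stmt_1_general (k : ℕ) :
    (∀ x ∈ Icc (0:ℝ) 1,
        deriv (deriv (fun x : ℝ => (1 - x) * Real.sin (2 * π * k * x))) x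
          + (2 * π * k) ^ 2 * ((1 - x) * Real.sin (2 * π * k * x))
          = -(4 * π * k) * Real.cos (2 * π * k * x)) ∧
    (fun x : ℝ => (1 - x) * Real.sin (2 * π * k * x)) 0
      = (fun x : ℝ => (1 - x) * Real.sin (2 * π * k * x)) 1 ∧
    deriv (fun x : ℝ => (1 - x) * Real.sin (2 * π * k * x)) 1 = 0 := by
  have hsin : sin (2 * π * k) = 0 := by
    simpa [mul_comm, mul_left_comm, mul_assoc] using sin_nat_mul_pi (2 * k)
  refine ⟨fun x _ => ?_, by simp, ?_⟩
  · rw [deriv_deriv_one_sub_mul_sin_add]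
    ring
  · simp [deriv_one_sub_mul_sin, hsin]

/-- For every `k ≥ 1`, `X x = (1 - x) · sin (2πkx)` satisfies
`X'' x + (2πk)² X x = -4πk · cos (2πkx)` on `[0,1]`, together with
`X 0 = X 1` and `X' 1 = 0`; i.e. `X` is an associated function of the
spectral problem corresponding to the eigenfunction `cos (2πkx)` and the
eigenvalue `(2πk)²`. -/
theorem stmt_1 (k : ℕ) (hk : 1 ≤ k) :
    (∀ x ∈ Icc (0:ℝ) 1,
        deriv (deriv (fun x : ℝ => (1 - x) * Real.sin (2 * π * k * x))) x
          + (2 * π * k) ^ 2 * ((1 - x) * Real.sin (2 * π * k * x))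
          = -(4 * π * k) * Real.cos (2 * π * k * x)) ∧
    (fun x : ℝ => (1 - x) * Real.sin (2 * π * k * x)) 0
      = (fun x : ℝ => (1 - x) * Real.sin (2 * π * k * x)) 1 ∧
    deriv (fun x : ℝ => (1 - x) * Real.sin (2 * π * k * x)) 1 = 0 :=
  stmt_1_general k
end

section
/- For all natural numbers k, m ≥ 1, ∫₀¹ 4·cos(2πkx) · x·cos(2πmx) dx equals 1 if k = m and equals 0 if k ≠ m. -/
/-!
By the product-to-sum formula `4 cos a cos b = 2 cos (a - b) + 2 cos (a + b)` the integrand becomes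
`2x cos (2π(k - m)x) + 2x cos (2π(k + m)x)`. An antiderivative of `x cos (cx)` is
`x sin (cx) / c + cos (cx) / c²`, which takes the same value at `0` and `1` when `c ∈ 2πℤ \ {0}`,
so only a zero frequency contributes, namely `∫₀¹ 2x dx = 1`, and this happens exactly when `k = m`.
-/

open Real Set intervalIntegral

theorem hasDerivAt_mul_sin_div_add_cos_div_sq {c : ℝ} (hc : c ≠ 0) (x : ℝ) :
    HasDerivAt (fun x => x * sin (c * x) / c + cos (c * x) / c ^ 2) (x * cos (c * x)) x := by
  have hlin : HasDerivAt (fun x => c * x) c x := by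
    simpa using (hasDerivAt_id x).const_mul c
  refine ((((hasDerivAt_id' x).mul hlin.sin).div_const c).add
    (hlin.cos.div_const (c ^ 2))).congr_deriv ?_
  field_simp
  ring

theorem integral_mul_cos_mul {c : ℝ} (hc : c ≠ 0) (a b : ℝ) :
    ∫ x in a..b, x * cos (c * x)
      = (b * sin (c * b) - a * sin (c * a)) / c + (cos (c * b) - cos (c * a)) / c ^ 2 := by
  rw [integral_eq_sub_of_hasDerivAt (fun x _ => hasDerivAt_mul_sin_div_add_cos_div_sq hc x)
    ((by fun_prop : Continuous fun x => x * cos (c * x)).intervalIntegrable a b)]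
  ring

theorem integral_zero_one_mul_cos_two_pi_int_mul (n : ℤ) :
    ∫ x in (0:ℝ)..1, x * cos (2 * π * n * x) = if n = 0 then 1 / 2 else 0 := by
  split_ifs with hn
  · simp [hn]
  · have hc : 2 * π * n ≠ 0 := by simp [pi_ne_zero, hn]
    have hsin : sin (2 * π * n) = 0 := by
      rw [show 2 * π * n = ((2 * n : ℤ) : ℝ) * π by push_cast; ring]
      exact sin_int_mul_pi (2 * n)
    have hcos : cos (2 * π * n) = 1 := by
      rw [show 2 * π * n = n * (2 * π) by ring]
      exact cos_int_mul_two_pi n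
    simp [integral_mul_cos_mul hc, hsin, hcos]

theorem four_mul_cos_mul_cos (a b : ℝ) :
    4 * cos a * cos b = 2 * cos (a - b) + 2 * cos (a + b) := by
  rw [cos_sub, cos_add]
  ring

theorem stmt_4_general (k m : ℕ) (hk : 1 ≤ k) :
    ∫ x in (0:ℝ)..1,
        (4 * Real.cos (2 * π * k * x)) * (x * Real.cos (2 * π * m * x))
      = if k = m then 1 else 0 := by
  have hsplit : ∀ x : ℝ, (4 * cos (2 * π * k * x)) * (x * cos (2 * π * m * x))
      = 2 * (x * cos (2 * π * ((k - m : ℤ) : ℝ) * x))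
        + 2 * (x * cos (2 * π * ((k + m : ℤ) : ℝ) * x)) := by
    intro x
    rw [← mul_assoc, mul_right_comm, four_mul_cos_mul_cos]
    push_cast
    ring_nf
  have hint : ∀ n : ℤ, IntervalIntegrable (fun x : ℝ => 2 * (x * cos (2 * π * n * x)))
      MeasureTheory.volume 0 1 := fun n => (by fun_prop : Continuous _).intervalIntegrable 0 1
  simp only [hsplit]
  rw [integral_add (hint _) (hint _), integral_const_mul, integral_const_mul,
    integral_zero_one_mul_cos_two_pi_int_mul, integral_zero_one_mul_cos_two_pi_int_mul,
    if_neg (by omega : (k + m : ℤ) ≠ 0)]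
  simp only [show (k - m : ℤ) = 0 ↔ k = m by omega]
  split_ifs <;> norm_num

/-- Biorthonormality of the odd-indexed elements:
`∫₀¹ 4 cos(2πkx) · x cos(2πmx) dx = δ_{km}` for `k, m ≥ 1`. -/
theorem stmt_4 (k m : ℕ) (hk : 1 ≤ k) (hm : 1 ≤ m) :
    ∫ x in (0:ℝ)..1,
        (4 * Real.cos (2 * π * k * x)) * (x * Real.cos (2 * π * m * x))
      = if k = m then 1 else 0 :=
  stmt_4_general k m hk
end

section
/- For all natural numbers k, m ≥ 1, ∫₀¹ 4(1−x)·sin(2πkx) · sin(2πmx) dx equals 1 if k = m and equals 0 if k ≠ m. -/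
open Real Set intervalIntegral

/-!
Writing `2 sin(2πkx) sin(2πmx) = cos(2π(k-m)x) - cos(2π(k+m)x)` reduces the integral to the
moments `∫₀¹ (1 - x) cos(2πnx) dx`, which equal `(1 - cos(2πn)) / (2πn)² = 0` for `n ≠ 0`
and `1/2` for `n = 0`.
-/

lemma hasDerivAt_one_sub_mul_cos_antideriv {c : ℝ} (hc : c ≠ 0) (x : ℝ) :
    HasDerivAt (fun y => (1 - y) * sin (c * y) / c - cos (c * y) / c ^ 2)
      ((1 - x) * cos (c * x)) x := by
  have hlin : HasDerivAt (fun y : ℝ => c * y) c x := by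
    simpa using (hasDerivAt_id x).const_mul c
  have hsin := hlin.sin
  have hcos := hlin.cos
  have hone : HasDerivAt (fun y : ℝ => 1 - y) (-1) x := by
    simpa using (hasDerivAt_id x).const_sub 1
  refine (((hone.mul hsin).div_const c).sub (hcos.div_const (c ^ 2))).congr_deriv ?_
  field_simp
  ring

lemma integral_one_sub_mul_cos {c : ℝ} (hc : c ≠ 0) :
    ∫ x in (0:ℝ)..1, (1 - x) * cos (c * x) = (1 - cos c) / c ^ 2 := by
  rw [integral_eq_sub_of_hasDerivAt (fun x _ => hasDerivAt_one_sub_mul_cos_antideriv hc x)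
    (by apply Continuous.intervalIntegrable; fun_prop)]
  field_simp
  simp only [sin_zero, mul_zero, cos_zero]
  ring

lemma integral_one_sub_mul_cos_two_pi_int_mul {n : ℤ} (hn : n ≠ 0) :
    ∫ x in (0:ℝ)..1, (1 - x) * cos (2 * π * n * x) = 0 := by
  have hc : 2 * π * n ≠ 0 := by positivity
  rw [integral_one_sub_mul_cos hc, mul_comm (2 * π), cos_int_mul_two_pi, sub_self, zero_div]

theorem stmt_5_general (k m : ℕ) (hk : 1 ≤ k) :
    ∫ x in (0:ℝ)..1,
        (4 * (1 - x) * Real.sin (2 * π * k * x)) * Real.sin (2 * π * m * x)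
      = if k = m then 1 else 0 := by
  have hexpand : ∀ x : ℝ,
      4 * (1 - x) * sin (2 * π * k * x) * sin (2 * π * m * x)
        = 2 * ((1 - x) * cos (2 * π * ((k - m : ℤ) : ℝ) * x))
          - 2 * ((1 - x) * cos (2 * π * ((k + m : ℤ) : ℝ) * x)) := by
    intro x
    have h := two_mul_sin_mul_sin (2 * π * k * x) (2 * π * m * x)
    rw [show 2 * π * k * x - 2 * π * m * x = 2 * π * (k - m) * x by ring,
      show 2 * π * k * x + 2 * π * m * x = 2 * π * (k + m) * x by ring] at h
    push_cast
    linear_combination 2 * (1 - x) * h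
  have hint (n : ℤ) : IntervalIntegrable (fun x : ℝ => 2 * ((1 - x) * cos (2 * π * n * x)))
      MeasureTheory.volume 0 1 := by
    apply Continuous.intervalIntegrable; fun_prop
  rw [integral_congr (fun x _ => hexpand x), integral_sub (hint _) (hint _),
    integral_const_mul, integral_const_mul,
    integral_one_sub_mul_cos_two_pi_int_mul (show (k + m : ℤ) ≠ 0 by omega)]
  split_ifs with hkm
  · subst hkm
    simp only [sub_self, Int.cast_zero, mul_zero, zero_mul, cos_zero, mul_one]
    rw [integral_sub intervalIntegrable_const intervalIntegrable_id, integral_id]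
    norm_num
  · rw [integral_one_sub_mul_cos_two_pi_int_mul (show (k - m : ℤ) ≠ 0 by omega)]
    ring

/-- Biorthonormality of the even-indexed elements:
`∫₀¹ 4(1-x) sin(2πkx) · sin(2πmx) dx = δ_{km}` for `k, m ≥ 1`. -/
theorem stmt_5 (k m : ℕ) (hk : 1 ≤ k) (hm : 1 ≤ m) :
    ∫ x in (0:ℝ)..1,
        (4 * (1 - x) * Real.sin (2 * π * k * x)) * Real.sin (2 * π * m * x)
      = if k = m then 1 else 0 :=
  stmt_5_general k m hk
end

section
/- Let T > 0, E(t) = exp(−t)/(2π), F(x,t) = (1−x)·sin(2πx)·exp(3t), and φ(x) = (1−x)·sin(2πx), with Fourier coefficients φ_{2k} = ∫₀¹ φ(x)·sin(2πkx) dx and F₀(t) = ∫₀¹ F(x,t)·x dx. Then the quantity C₂ = ∫₀ᵀ E'(t) dt + Σ_{k=1}^{∞} (2/(πk))·φ_{2k} − 2∫₀ᵀ F₀(t) dt equals exp(−T)/(2π), and in particular C₂ > 0. -/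
open Real Set intervalIntegral

/-!
Everything comes from the reflection `x ↦ 1 - x` of `[0, 1]`. The weight `x (1 - x)` is symmetric
and `sin 2πx` is antisymmetric, so `F₀ ≡ 0`. The product `sin 2πx · sin 2πkx` is symmetric, so the
weight `1 - x` may be replaced by its mean `1/2`, and orthogonality of the sines gives
`φ_{2k} = δ_{k,1} / 4`. The series therefore equals `1/(2π) = E 0`, which cancels against
`∫₀ᵀ E' = E T - E 0`.
-/

theorem integral_eq_zero_of_comp_one_sub_eq_neg (f : ℝ → ℝ) (hf : ∀ x, f (1 - x) = -f x) :
    ∫ x in (0:ℝ)..1, f x = 0 := by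
  have hflip : ∫ x in (0:ℝ)..1, f (1 - x) = ∫ x in (0:ℝ)..1, f x := by
    simp
  simp_rw [hf, intervalIntegral.integral_neg] at hflip
  linarith

theorem integral_one_sub_mul_of_comp_one_sub_eq (g : ℝ → ℝ)
    (hg : IntervalIntegrable g MeasureTheory.volume 0 1) (hsymm : ∀ x, g (1 - x) = g x) :
    ∫ x in (0:ℝ)..1, (1 - x) * g x = (∫ x in (0:ℝ)..1, g x) / 2 := by
  have hodd : ∫ x in (0:ℝ)..1, (1 / 2 - x) * g x = 0 :=
    integral_eq_zero_of_comp_one_sub_eq_neg _ fun x => by rw [hsymm]; ring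
  calc ∫ x in (0:ℝ)..1, (1 - x) * g x
      = ∫ x in (0:ℝ)..1, (g x / 2 + (1 / 2 - x) * g x) :=
        integral_congr fun x _ => by ring
    _ = (∫ x in (0:ℝ)..1, g x) / 2 := by
        rw [integral_add (hg.div_const 2) (hg.continuousOn_mul (by fun_prop)),
          intervalIntegral.integral_div, hodd, add_zero]

theorem sin_two_pi_int_mul_one_sub (m : ℤ) (x : ℝ) :
    sin (2 * π * m * (1 - x)) = -sin (2 * π * m * x) := by
  rw [← sin_int_mul_two_pi_sub _ m]
  ring_nf

theorem integral_cos_two_pi_int_mul (m : ℤ) :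
    ∫ x in (0:ℝ)..1, cos (2 * π * m * x) = if m = 0 then 1 else 0 := by
  split_ifs with hm
  · simp [hm]
  · have hc : 2 * π * m ≠ 0 := by positivity
    rw [integral_comp_mul_left (fun x => cos x) hc, integral_cos, mul_one, mul_zero, sin_zero,
      show 2 * π * m = (2 * m : ℤ) * π by push_cast; ring, sin_int_mul_pi, sub_zero, smul_zero]

theorem integral_sin_mul_sin_two_pi_int_mul (m n : ℤ) :
    ∫ x in (0:ℝ)..1, sin (2 * π * m * x) * sin (2 * π * n * x)
      = ((if m = n then 1 else 0) - (if m = -n then 1 else 0)) / 2 := by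
  have hprod : ∀ x : ℝ, sin (2 * π * m * x) * sin (2 * π * n * x)
      = (cos (2 * π * (m - n : ℤ) * x) - cos (2 * π * (m + n : ℤ) * x)) / 2 := by
    intro x
    push_cast
    rw [show 2 * π * (m - n) * x = 2 * π * m * x - 2 * π * n * x by ring,
      show 2 * π * (m + n) * x = 2 * π * m * x + 2 * π * n * x by ring, cos_sub, cos_add]
    ring
  simp_rw [hprod, intervalIntegral.integral_div]
  rw [integral_sub ((by fun_prop : Continuous _).intervalIntegrable _ _)
      ((by fun_prop : Continuous _).intervalIntegrable _ _), integral_cos_two_pi_int_mul,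
    integral_cos_two_pi_int_mul]
  simp only [sub_eq_zero, add_eq_zero_iff_eq_neg]

theorem integral_one_sub_mul_sin_mul_sin_two_pi_int_mul (m n : ℤ) :
    ∫ x in (0:ℝ)..1, (1 - x) * (sin (2 * π * m * x) * sin (2 * π * n * x))
      = ((if m = n then 1 else 0) - (if m = -n then 1 else 0)) / 4 := by
  rw [integral_one_sub_mul_of_comp_one_sub_eq _
      ((by fun_prop : Continuous _).intervalIntegrable _ _)
      fun x => by simp only [sin_two_pi_int_mul_one_sub, neg_mul_neg],
    integral_sin_mul_sin_two_pi_int_mul]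
  ring

theorem integral_one_sub_mul_sin_two_pi_mul_sin (k : ℕ) :
    ∫ x in (0:ℝ)..1, (1 - x) * sin (2 * π * x) * sin (2 * π * k * x)
      = if k = 1 then 1 / 4 else 0 := by
  have h := integral_one_sub_mul_sin_mul_sin_two_pi_int_mul 1 k
  simp only [Int.cast_one, mul_one, Int.cast_natCast, ← mul_assoc] at h
  rw [h, if_neg (by omega : (1 : ℤ) ≠ -k)]
  by_cases hk : k = 1 <;> simp [hk, eq_comm (a := (1 : ℤ))]

theorem integral_one_sub_mul_sin_two_pi_mul_const_mul (c : ℝ) :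
    ∫ x in (0:ℝ)..1, (1 - x) * sin (2 * π * x) * c * x = 0 :=
  integral_eq_zero_of_comp_one_sub_eq_neg _ fun x => by
    rw [show 2 * π * (1 - x) = 2 * π - 2 * π * x by ring, sin_two_pi_sub]
    ring

theorem stmt_17_general (T : ℝ)
    (E : ℝ → ℝ) (F : ℝ → ℝ → ℝ) (φ : ℝ → ℝ)
    (hE : E = fun t => Real.exp (-t) / (2 * π))
    (hF : F = fun x t => (1 - x) * Real.sin (2 * π * x) * Real.exp (3 * t))
    (hφ : φ = fun x => (1 - x) * Real.sin (2 * π * x))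
    (φ₂ : ℕ → ℝ)
    (hφ₂ : ∀ k : ℕ, φ₂ k = ∫ x in (0:ℝ)..1, φ x * Real.sin (2 * π * k * x))
    (F₀ : ℝ → ℝ)
    (hF₀ : ∀ t : ℝ, F₀ t = ∫ x in (0:ℝ)..1, F x t * x)
    (C₂ : ℝ)
    (hC₂ : C₂ = (∫ t in (0:ℝ)..T, deriv E t)
      + (∑' k : ℕ, (2 / (π * (k + 1))) * φ₂ (k + 1))
      - 2 * ∫ t in (0:ℝ)..T, F₀ t) :
    C₂ = Real.exp (-T) / (2 * π) ∧ 0 < C₂ := by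
  have hE₁ : ContDiff ℝ 1 E := by subst hE; fun_prop
  have hderiv : ∫ t in (0:ℝ)..T, deriv E t = E T - E 0 :=
    integral_deriv_eq_sub (fun t _ => hE₁.differentiable one_ne_zero t)
      ((hE₁.continuous_deriv le_rfl).intervalIntegrable _ _)
  have hφ₂' (k : ℕ) : φ₂ k = if k = 1 then 1 / 4 else 0 := by
    rw [hφ₂, hφ, integral_one_sub_mul_sin_two_pi_mul_sin]
  have hseries : ∑' k : ℕ, 2 / (π * (k + 1)) * φ₂ (k + 1) = 1 / (2 * π) := by
    rw [tsum_eq_single 0 fun k hk => by simp [hφ₂', hk]]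
    simp only [hφ₂', Nat.cast_zero, zero_add, mul_one, ↓reduceIte]
    ring
  have hF₀_zero (t : ℝ) : F₀ t = 0 := by
    rw [hF₀, hF]
    exact integral_one_sub_mul_sin_two_pi_mul_const_mul _
  have hC : C₂ = exp (-T) / (2 * π) := by
    rw [hC₂, hderiv, hseries]
    simp only [hF₀_zero, integral_zero, hE, neg_zero, exp_zero]
    ring
  exact ⟨hC, hC ▸ by positivity⟩

/-- For the example data `E(t) = e^{-t}/(2π)`, `F(x,t) = (1-x) sin(2πx) e^{3t}`,
`φ(x) = (1-x) sin(2πx)`, the quantity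
`C₂ = ∫₀ᵀ E'(t) dt + Σ_{k=1}^∞ (2/(πk)) φ_{2k} - 2 ∫₀ᵀ F₀(t) dt`
equals `e^{-T}/(2π)`; in particular `C₂ > 0`. -/
theorem stmt_17 (T : ℝ) (hT : 0 < T)
    (E : ℝ → ℝ) (F : ℝ → ℝ → ℝ) (φ : ℝ → ℝ)
    (hE : E = fun t => Real.exp (-t) / (2 * π))
    (hF : F = fun x t => (1 - x) * Real.sin (2 * π * x) * Real.exp (3 * t))
    (hφ : φ = fun x => (1 - x) * Real.sin (2 * π * x))
    (φ₂ : ℕ → ℝ)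
    (hφ₂ : ∀ k : ℕ, φ₂ k = ∫ x in (0:ℝ)..1, φ x * Real.sin (2 * π * k * x))
    (F₀ : ℝ → ℝ)
    (hF₀ : ∀ t : ℝ, F₀ t = ∫ x in (0:ℝ)..1, F x t * x)
    (C₂ : ℝ)
    (hC₂ : C₂ = (∫ t in (0:ℝ)..T, deriv E t)
      + (∑' k : ℕ, (2 / (π * (k + 1))) * φ₂ (k + 1))
      - 2 * ∫ t in (0:ℝ)..T, F₀ t) :
    C₂ = Real.exp (-T) / (2 * π) ∧ 0 < C₂ :=
  stmt_17_general T E F φ hE hF hφ φ₂ hφ₂ F₀ hF₀ C₂ hC₂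
end
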